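/- Softmax separation: let a : Fin n → ℝ, S nonempty with a_i ≥ log(L/ε) for i ∈ S and a_i ≤ 0 for i ∉ S, where L ≥ n − |S| and ε ∈ (0,1). Then ∑_{i ∈ S} softmax(a)_i ≥ 1 − ε. -/
import Mathlib


theorem stmt_11 (n : ℕ) (hn : 1 ≤ n) (a : Fin n → ℝ)
    (S : Finset (Fin n)) (hS : S.Nonempty)
    (ε L : ℝ) (hε : ε ∈ Set.Ioo (0 : ℝ) 1) (hL : 0 < L)
    (hLn : ((n - S.card : ℕ) : ℝ) ≤ L)
    (hin : ∀ i ∈ S, Real.log (L / ε) ≤ a i) (hout : ∀ i ∉ S, a i ≤ 0) :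
    (∑ i ∈ S, Real.exp (a i) / ∑ j, Real.exp (a j)) ≥ 1 - ε := by
  obtain ⟨hε0, hε1⟩ := hε
  set T := ∑ j, Real.exp (a j) with hTdef
  set A := ∑ i ∈ S, Real.exp (a i) with hAdef
  have hT : 0 < T := Finset.sum_pos (fun i _ => Real.exp_pos _)
    (Finset.univ_nonempty_iff.mpr ⟨hS.choose⟩)
  have hsplit : T = A + ∑ i ∈ Sᶜ, Real.exp (a i) := by
    rw [hTdef, hAdef, ← Finset.sum_add_sum_compl S]
  have hB : ∑ i ∈ Sᶜ, Real.exp (a i) ≤ L := by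
    calc ∑ i ∈ Sᶜ, Real.exp (a i) ≤ ∑ _i ∈ Sᶜ, (1 : ℝ) := by
          apply Finset.sum_le_sum
          intro i hi
          have := hout i (by simpa using hi)
          simpa using Real.exp_le_one_iff.mpr this
      _ = (Sᶜ.card : ℝ) := by simp
      _ = ((n - S.card : ℕ) : ℝ) := by
          rw [Finset.card_compl]; simp
      _ ≤ L := hLn
  have hA : L / ε ≤ A := by
    obtain ⟨i0, hi0⟩ := hS
    calc L / ε = Real.exp (Real.log (L / ε)) := by
          rw [Real.exp_log (div_pos hL hε0)]
      _ ≤ Real.exp (a i0) := Real.exp_le_exp.mpr (hin i0 hi0)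
      _ ≤ A := Finset.single_le_sum (fun i _ => (Real.exp_pos _).le) hi0
  have key : (1 - ε) * T ≤ A := by
    have h1 : ε * (L / ε) ≤ ε * A := by
      exact mul_le_mul_of_nonneg_left hA hε0.le
    have h2 : ε * (L / ε) = L := by field_simp
    nlinarith [hB, hsplit]
  have : (∑ i ∈ S, Real.exp (a i) / T) = A / T := by
    rw [hAdef, Finset.sum_div]
  rw [this, ge_iff_le, le_div_iff₀ hT]
  linarith
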